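/- Let A be a binary linear code of length n and dimension K with weight distribution (A₀,...,Aₙ), and let (B₀,...,Bₙ) be the weight distribution of the dual code A⊥. Then as polynomials in X: Σᵢ Aᵢ Xⁱ = 2^{K-n} Σᵢ Bᵢ (1+X)^{n-i}(1-X)^i. -/

import Mathlib

open Polynomial

/-- Hamming weight of a vector in F₂ⁿ. -/
def wt {n : ℕ} (v : Fin n → ZMod 2) : ℕ :=
  (Finset.univ.filter fun j => v j ≠ 0).card

/-- Dual code: vectors orthogonal to every codeword. -/
def dualSet {n : ℕ} (A : Submodule (ZMod 2) (Fin n → ZMod 2)) : Set (Fin n → ZMod 2) :=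
  {u | ∀ c ∈ A, ∑ j, u j * c j = 0}

/-!
Over a domain of characteristic `≠ 2`, expanding `∏ⱼ (1 + (-1)^(cⱼ) x)` coordinatewise gives
`(1 + x)^(n - wt c) (1 - x)^(wt c) = ∑ᵥ (-1)^(v ⬝ c) x^(wt v)`. Summing over `c` in a code `W`,
the character `c ↦ (-1)^(v ⬝ c)` of `W` sums to `|W|` if `v ∈ W⊥` and to `0` otherwise, so
`∑_{c ∈ W} (1 + x)^(n - wt c) (1 - x)^(wt c) = |W| ∑_{u ∈ W⊥} x^(wt u)`.
The theorem is this identity in `ℚ[X]` for `W = A⊥`, since `A⊥⊥ = A` and `|A⊥| = 2^(n - K)`.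
-/

open Finset

lemma AddChar.map_sum_eq_prod {ι A M : Type*} [AddCommMonoid A] [CommMonoid M]
    (ψ : AddChar A M) (s : Finset ι) (f : ι → A) :
    ψ (∑ i ∈ s, f i) = ∏ i ∈ s, ψ (f i) :=
  map_prod ψ.toMonoidHom (fun i => Multiplicative.ofAdd (f i)) s

section

variable {n : ℕ}

lemma wt_le (v : Fin n → ZMod 2) : wt v ≤ n :=
  (hammingNorm_le_card_fintype (x := v)).trans_eq (Fintype.card_fin n)

section signChar

variable (R : Type*) [CommRing R]

def signChar : AddChar (ZMod 2) R := AddChar.zmodChar 2 (neg_one_sq (R := R))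

variable {R}

@[simp] lemma signChar_one : signChar R 1 = -1 :=
  pow_one _

lemma sum_signChar_mul_mul_ite (b : ZMod 2) (x : R) :
    ∑ a : ZMod 2, signChar R (a * b) * (if a ≠ 0 then x else 1) =
      if b ≠ 0 then 1 - x else 1 + x := by
  rw [show (univ : Finset (ZMod 2)) = {0, 1} from rfl, sum_pair zero_ne_one]
  obtain rfl | rfl : b = 0 ∨ b = 1 := by revert b; decide
  · simp
  · simp [sub_eq_add_neg]

end signChar

section

variable {R : Type*} [CommRing R]

lemma pow_wt_eq_prod_ite (x : R) (v : Fin n → ZMod 2) :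
    x ^ wt v = ∏ j, if v j ≠ 0 then x else 1 := by
  rw [← prod_filter, prod_const]
  rfl

lemma prod_ite_ne_zero_eq_pow_mul_pow (c : Fin n → ZMod 2) (x y : R) :
    ∏ j, (if c j ≠ 0 then y else x) = x ^ (n - wt c) * y ^ wt c := by
  rw [prod_ite, prod_const, prod_const, mul_comm]
  congr 2
  have := card_filter_add_card_filter_not (s := univ) fun j => c j ≠ 0
  rw [card_univ, Fintype.card_fin] at this
  exact Nat.eq_sub_of_add_eq' this

lemma sum_signChar_dotProduct_mul_pow_wt (c : Fin n → ZMod 2) (x : R) :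
    ∑ v, signChar R (v ⬝ᵥ c) * x ^ wt v = (1 + x) ^ (n - wt c) * (1 - x) ^ wt c :=
  calc ∑ v, signChar R (v ⬝ᵥ c) * x ^ wt v
      = ∑ v : Fin n → ZMod 2, ∏ j, signChar R (v j * c j) * (if v j ≠ 0 then x else 1) := by
        simp only [dotProduct, AddChar.map_sum_eq_prod, pow_wt_eq_prod_ite, prod_mul_distrib]
    _ = ∏ j, ∑ a : ZMod 2, signChar R (a * c j) * (if a ≠ 0 then x else 1) := by
        rw [Fintype.prod_sum]
    _ = ∏ j, if c j ≠ 0 then 1 - x else 1 + x := by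
        simp only [sum_signChar_mul_mul_ite]
    _ = (1 + x) ^ (n - wt c) * (1 - x) ^ wt c := prod_ite_ne_zero_eq_pow_mul_pow c _ _

end

section

variable {R : Type*} [CommRing R] [IsDomain R]

lemma signChar_eq_one_iff (hR : ringChar R ≠ 2) {a : ZMod 2} : signChar R a = 1 ↔ a = 0 := by
  obtain rfl | rfl : a = 0 ∨ a = 1 := by revert a; decide
  · simp
  · simpa using Ring.neg_one_ne_one_of_char_ne_two hR

open scoped Classical in
lemma sum_mem_signChar_dotProduct (hR : ringChar R ≠ 2)
    (W : Submodule (ZMod 2) (Fin n → ZMod 2)) (v : Fin n → ZMod 2) :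
    ∑ c with c ∈ W, signChar R (v ⬝ᵥ c) =
      if v ∈ dualSet W then (Fintype.card W : R) else 0 := by
  let ψ : AddChar W R := (signChar R).compAddMonoidHom
    ((dotProductBilin (ZMod 2) (ZMod 2) v).comp W.subtype).toAddMonoidHom
  have hψ : ψ = 0 ↔ v ∈ dualSet W := by
    simp [ψ, AddChar.eq_zero_iff, signChar_eq_one_iff hR, dualSet, dotProduct]
  rw [sum_subtype (p := (· ∈ W)) _ (fun c => by simp), ← if_congr hψ rfl rfl]
  exact AddChar.sum_eq_ite ψ

end

open scoped Classical in
lemma sum_mem_one_add_pow_mul_one_sub_pow_wt {R : Type*} [CommRing R] [IsDomain R]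
    (hR : ringChar R ≠ 2) (W : Submodule (ZMod 2) (Fin n → ZMod 2)) (x : R) :
    ∑ c with c ∈ W, (1 + x) ^ (n - wt c) * (1 - x) ^ wt c =
      Fintype.card W * ∑ u with u ∈ dualSet W, x ^ wt u :=
  calc ∑ c with c ∈ W, (1 + x) ^ (n - wt c) * (1 - x) ^ wt c
      = ∑ v, (∑ c with c ∈ W, signChar R (v ⬝ᵥ c)) * x ^ wt v := by
        simp_rw [← sum_signChar_dotProduct_mul_pow_wt, sum_mul]
        exact sum_comm
    _ = ∑ v, if v ∈ dualSet W then (Fintype.card W : R) * x ^ wt v else 0 := by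
        simp_rw [sum_mem_signChar_dotProduct hR, ite_mul, zero_mul]
    _ = Fintype.card W * ∑ u with u ∈ dualSet W, x ^ wt u := by
        rw [← sum_filter, mul_sum]

lemma sum_range_ncard_wt_smul {M : Type*} [AddCommMonoid M] (S : Set (Fin n → ZMod 2))
    [DecidablePred (· ∈ S)] (f : ℕ → M) :
    ∑ i ∈ range (n + 1), {v | v ∈ S ∧ wt v = i}.ncard • f i = ∑ v with v ∈ S, f (wt v) := by
  rw [← sum_fiberwise_of_maps_to (t := range (n + 1))
    (fun v _ => mem_range.2 (Nat.lt_succ_of_le (wt_le v)))]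
  refine sum_congr rfl fun i _ => ?_
  rw [sum_congr rfl fun v hv => by rw [(mem_filter.1 hv).2], sum_const, filter_filter,
    ← Set.ncard_coe_finset]
  simp

section

variable {K m : Type*} [CommRing K] [Fintype m]

lemma dotProductBilin_isRefl :
    LinearMap.BilinForm.IsRefl (dotProductBilin K K : LinearMap.BilinForm K (m → K)) :=
  fun u v h => by rwa [dotProductBilin_apply_apply, dotProduct_comm] at h

lemma dotProductBilin_nondegenerate [DecidableEq m] :
    LinearMap.BilinForm.Nondegenerate (dotProductBilin K K : LinearMap.BilinForm K (m → K)) :=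
  (LinearMap.IsRefl.nondegenerate_iff_separatingLeft
    (dotProductBilin_isRefl (K := K) (m := m))).2 fun u hu =>
      funext fun j => by simpa using hu (Pi.single j 1)

end

lemma dualSet_eq_orthogonal (A : Submodule (ZMod 2) (Fin n → ZMod 2)) :
    dualSet A = LinearMap.BilinForm.orthogonal (dotProductBilin (ZMod 2) (ZMod 2)) A := by
  ext u
  simp only [dualSet, Set.mem_ofPred_eq, SetLike.mem_coe, LinearMap.BilinForm.mem_orthogonal_iff,
    dotProductBilin_apply_apply, dotProduct_comm _ u]
  rfl

end

theorem macwilliams_identity (n Kdim : ℕ)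
    (A : Submodule (ZMod 2) (Fin n → ZMod 2))
    (hK : Module.finrank (ZMod 2) A = Kdim)
    (Aw B : ℕ → ℕ)
    (hA : ∀ i, Aw i = {v | v ∈ A ∧ wt v = i}.ncard)
    (hB : ∀ i, B i = {u | u ∈ dualSet A ∧ wt u = i}.ncard) :
    ∑ i ∈ Finset.range (n + 1), Polynomial.C ((Aw i : ℚ)) * Polynomial.X ^ i =
      Polynomial.C ((2 : ℚ) ^ ((Kdim : ℤ) - (n : ℤ))) *
        ∑ i ∈ Finset.range (n + 1),
          Polynomial.C ((B i : ℚ)) *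
            (1 + Polynomial.X) ^ (n - i) * (1 - Polynomial.X) ^ i := by
  classical
  set D := LinearMap.BilinForm.orthogonal (dotProductBilin (ZMod 2) (ZMod 2)) A
  have hdualA : dualSet A = D := dualSet_eq_orthogonal A
  have hdualD : dualSet D = A := by
    rw [dualSet_eq_orthogonal, LinearMap.BilinForm.orthogonal_orthogonal
      dotProductBilin_nondegenerate dotProductBilin_isRefl]
  have hKn : Kdim ≤ n := hK ▸ (Submodule.finrank_le A).trans_eq (Module.finrank_fin_fun _)
  have hcardD : Fintype.card D = 2 ^ (n - Kdim) := by
    rw [Module.card_eq_pow_finrank (K := ZMod 2), ZMod.card,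
      LinearMap.BilinForm.finrank_orthogonal dotProductBilin_nondegenerate,
      Module.finrank_fin_fun, hK]
  have hscale : (2 : ℚ) ^ ((Kdim : ℤ) - n) * 2 ^ (n - Kdim) = 1 := by
    rw [← zpow_natCast, ← zpow_add₀ two_ne_zero, Nat.cast_sub hKn]
    simp
  have hchar : ringChar ℚ[X] ≠ 2 := by simp [ringChar.eq_zero]
  calc ∑ i ∈ range (n + 1), C (Aw i : ℚ) * X ^ i
      = ∑ v with v ∈ A, (X : ℚ[X]) ^ wt v := by
        simp_rw [hA, map_natCast, ← nsmul_eq_mul, ← SetLike.mem_coe (x := _) (p := A)]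
        rw [sum_range_ncard_wt_smul]
    _ = C (2 ^ ((Kdim : ℤ) - n)) *
          ((Fintype.card D : ℚ[X]) * ∑ u with u ∈ dualSet D, X ^ wt u) := by
        rw [← mul_assoc, hcardD, Nat.cast_pow, Nat.cast_ofNat, ← C_ofNat, ← C_pow, ← C_mul,
          hscale, C_1, one_mul, hdualD]
        rfl
    _ = C (2 ^ ((Kdim : ℤ) - n)) * ∑ c with c ∈ D, (1 + X) ^ (n - wt c) * (1 - X) ^ wt c := by
        rw [sum_mem_one_add_pow_mul_one_sub_pow_wt hchar]
    _ = _ := by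
        simp_rw [hB, map_natCast, mul_assoc, ← nsmul_eq_mul, hdualA]
        rw [sum_range_ncard_wt_smul]
        rfl
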